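/- arXiv:2307.02619 — 3 statements merged into one kernel-verified Lean document; each statement's English description precedes it below -/
import Mathlib

section
/- Let V(z) be the q×p matrix with (i,j) entry V_{−(j+1),−(i+1)}(z) (0 ≤ i ≤ q−1, 0 ≤ j ≤ p−1) and, for k ≥ 0, let V_k(z) be the q×p matrix with (i,j) entry Σ_{n≥0} ((E^{[k]})^n)_{i,j} z^{−n−1}. Then V(z) = V_0(z), and for every k ≥ 1 all the transformations below are defined and V(z) = (τ_{ν,0} ∘ τ_{ν,1} ∘ ⋯ ∘ τ_{ν,k−1})(V_k(z)). -/
open scoped BigOperators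
open Finset

noncomputable section

/-- The field `ℂ((z⁻¹))`, realized as Laurent series in the variable `t = z⁻¹`. -/
abbrev LS : Type := LaurentSeries ℂ

/-- The element `z` of `ℂ((z⁻¹))` (i.e. `t⁻¹`). -/
def zLS : LS := HahnSeries.single (-1 : ℤ) (1 : ℂ)

/-- Constant (scalar) Laurent series. -/
def CLS (c : ℂ) : LS := HahnSeries.C c

/-- The generating series `Σ_{n ≥ 0} c n · z^{-n-1}` in `ℂ((z⁻¹))`. -/
def gen (c : ℕ → ℂ) : LS :=
  HahnSeries.single (1 : ℤ) (1 : ℂ) * (HahnSeries.ofPowerSeries ℤ ℂ) (PowerSeries.mk c)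

/-- Weight of a step of displacement `s` starting at height `h`:
`a_h^{(s)}` if `s ≥ 0`, and `a_{h+s}^{(s)}` if `s < 0`.  (Here `a k n = aₙ⁽ᵏ⁾`.) -/
def stepW (a : ℤ → ℤ → ℂ) (h s : ℤ) : ℂ := if 0 ≤ s then a s h else a s (h + s)

/-- Extend a finite step sequence by zero. -/
def ext {n : ℕ} (s : Fin n → ℤ) : ℕ → ℤ := fun t => if h : t < n then s ⟨t, h⟩ else 0

/-- Height after `k` steps, starting at height `i`. -/
def hgt (i : ℤ) (σ : ℕ → ℤ) (k : ℕ) : ℤ := i + ∑ t ∈ Finset.range k, σ t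

/-- Weight of the lattice path of length `n` starting at height `i` with steps `σ`. -/
def wgt (a : ℤ → ℤ → ℂ) (n : ℕ) (i : ℤ) (σ : ℕ → ℤ) : ℂ :=
  ∏ k ∈ Finset.range n, stepW a (hgt i σ k) (σ k)

/-- All admissible step sequences of length `n` (each step in `[-p, q]`). -/
def steps (p q n : ℕ) : Finset (Fin n → ℤ) :=
  Fintype.piFinset fun _ => Finset.Icc (-(p : ℤ)) (q : ℤ)

/-- `A_{[n,i,j]}`: weight polynomial of paths of length `n` from `(0,i)` to `(n,j)`
staying at height `≥ 0`. -/
def Apoly (p q : ℕ) (a : ℤ → ℤ → ℂ) (n : ℕ) (i j : ℤ) : ℂ :=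
  ∑ s ∈ steps p q n,
    if hgt i (ext s) n = j ∧ ∀ k ≤ n, 0 ≤ hgt i (ext s) k then wgt a n i (ext s) else 0

/-- `W_{[n,i,j]}`: weight polynomial of unrestricted paths of length `n` from `(0,i)` to `(n,j)`. -/
def Wpoly (p q : ℕ) (a : ℤ → ℤ → ℂ) (n : ℕ) (i j : ℤ) : ℂ :=
  ∑ s ∈ steps p q n, if hgt i (ext s) n = j then wgt a n i (ext s) else 0

/-- `V_{[n,i,j]}`: weight polynomial of paths of length `n` from `(0,i)` to `(n,j)`
staying at height `≤ -1`. -/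
def Vpoly (p q : ℕ) (a : ℤ → ℤ → ℂ) (n : ℕ) (i j : ℤ) : ℂ :=
  ∑ s ∈ steps p q n,
    if hgt i (ext s) n = j ∧ ∀ k ≤ n, hgt i (ext s) k ≤ -1 then wgt a n i (ext s) else 0

/-- `A_{[ℓ,i,j,N]}`: weight polynomial of paths of length `ℓ` from `(0,i)` to `(ℓ,j)`
with all heights in `{0, …, N-1}`. -/
def Aboxpoly (p q : ℕ) (a : ℤ → ℤ → ℂ) (N ℓ : ℕ) (i j : ℤ) : ℂ :=
  ∑ s ∈ steps p q ℓ,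
    if hgt i (ext s) ℓ = j ∧ ∀ k ≤ ℓ, 0 ≤ hgt i (ext s) k ∧ hgt i (ext s) k ≤ (N : ℤ) - 1
    then wgt a ℓ i (ext s) else 0

/-- The generating series `A_{i,j}(z)`. -/
def Aser (p q : ℕ) (a : ℤ → ℤ → ℂ) (i j : ℤ) : LS := gen fun n => Apoly p q a n i j

/-- The generating series `W_{i,j}(z)`. -/
def Wser (p q : ℕ) (a : ℤ → ℤ → ℂ) (i j : ℤ) : LS := gen fun n => Wpoly p q a n i j

/-- The generating series `V_{i,j}(z)`. -/
def Vser (p q : ℕ) (a : ℤ → ℤ → ℂ) (i j : ℤ) : LS := gen fun n => Vpoly p q a n i j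


/-- The one-sided banded matrix `H`: `h_{i,j} = a_{min(i,j)}^{(j-i)}` when `-p ≤ j-i ≤ q`. -/
def Hmat (p q : ℕ) (a : ℤ → ℤ → ℂ) (i j : ℕ) : ℂ :=
  if -(p : ℤ) ≤ (j : ℤ) - (i : ℤ) ∧ (j : ℤ) - (i : ℤ) ≤ (q : ℤ) then
    a ((j : ℤ) - (i : ℤ)) (min (i : ℤ) (j : ℤ)) else 0

/-- Entrywise power of a one-sided matrix whose rows are supported on `[0, i + B]`:
`(M^n)_{i,j}`. -/
def onePow (M : ℕ → ℕ → ℂ) (B : ℕ) : ℕ → ℕ → ℕ → ℂ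
  | 0, i, j => if i = j then 1 else 0
  | n + 1, i, j => ∑ r ∈ Finset.range (i + B + 1), M i r * onePow M B n r j

/-- The transformation `T` on `q × p` matrices (over a field) with nonzero `(0,0)` entry. -/
def Tmat {F : Type*} [Field F] {q p : ℕ} (hq : 0 < q) (hp : 0 < p)
    (A : Matrix (Fin q) (Fin p) F) : Matrix (Fin q) (Fin p) F := fun i j =>
  if hi : (i : ℕ) + 1 < q then
    if hj : (j : ℕ) + 1 < p then
      (A ⟨(i : ℕ) + 1, hi⟩ ⟨(j : ℕ) + 1, hj⟩ * A ⟨0, hq⟩ ⟨0, hp⟩ -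
          A ⟨0, hq⟩ ⟨(j : ℕ) + 1, hj⟩ * A ⟨(i : ℕ) + 1, hi⟩ ⟨0, hp⟩) / A ⟨0, hq⟩ ⟨0, hp⟩
    else A ⟨(i : ℕ) + 1, hi⟩ ⟨0, hp⟩ / A ⟨0, hq⟩ ⟨0, hp⟩
  else
    if hj : (j : ℕ) + 1 < p then -A ⟨0, hq⟩ ⟨(j : ℕ) + 1, hj⟩ / A ⟨0, hq⟩ ⟨0, hp⟩
    else 1 / A ⟨0, hq⟩ ⟨0, hp⟩

/-- The inverse transformation `T⁻¹` on `q × p` matrices with nonzero `(q-1,p-1)` entry. -/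
def Tinv {F : Type*} [Field F] {q p : ℕ} (hq : 0 < q) (hp : 0 < p)
    (B : Matrix (Fin q) (Fin p) F) : Matrix (Fin q) (Fin p) F := fun i j =>
  if hi : (i : ℕ) = 0 then
    if hj : (j : ℕ) = 0 then
      1 / B ⟨q - 1, Nat.sub_lt hq one_pos⟩ ⟨p - 1, Nat.sub_lt hp one_pos⟩
    else
      -B ⟨q - 1, Nat.sub_lt hq one_pos⟩ ⟨(j : ℕ) - 1, by have := j.isLt; omega⟩ /
        B ⟨q - 1, Nat.sub_lt hq one_pos⟩ ⟨p - 1, Nat.sub_lt hp one_pos⟩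
  else
    if hj : (j : ℕ) = 0 then
      B ⟨(i : ℕ) - 1, by have := i.isLt; omega⟩ ⟨p - 1, Nat.sub_lt hp one_pos⟩ /
        B ⟨q - 1, Nat.sub_lt hq one_pos⟩ ⟨p - 1, Nat.sub_lt hp one_pos⟩
    else
      (B ⟨(i : ℕ) - 1, by have := i.isLt; omega⟩ ⟨(j : ℕ) - 1, by have := j.isLt; omega⟩ *
          B ⟨q - 1, Nat.sub_lt hq one_pos⟩ ⟨p - 1, Nat.sub_lt hp one_pos⟩ -
        B ⟨(i : ℕ) - 1, by have := i.isLt; omega⟩ ⟨p - 1, Nat.sub_lt hp one_pos⟩ *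
          B ⟨q - 1, Nat.sub_lt hq one_pos⟩ ⟨(j : ℕ) - 1, by have := j.isLt; omega⟩) /
        B ⟨q - 1, Nat.sub_lt hq one_pos⟩ ⟨p - 1, Nat.sub_lt hp one_pos⟩

/-- `chainFrom τ k X m = τ_m (τ_{m+1} ( ⋯ (τ_{k-1} X)))`; in particular
`chainFrom τ k X 0 = (τ_0 ∘ τ_1 ∘ ⋯ ∘ τ_{k-1}) X`. -/
def chainFrom {M : Type*} (τ : ℕ → M → M) (k : ℕ) (X : M) (m : ℕ) : M :=
  (List.range (k - m)).foldr (fun t Y => τ (m + t) Y) X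

/-- The `q × p` matrix `α_k(z)`, whose only nonzero entry is `z - a_k^{(0)}` at `(q-1, p-1)`. -/
def alphaZ (q p : ℕ) (a : ℤ → ℤ → ℂ) (k : ℕ) : Matrix (Fin q) (Fin p) LS := fun i j =>
  if (i : ℕ) = q - 1 ∧ (j : ℕ) = p - 1 then zLS - CLS (a 0 (k : ℤ)) else 0

/-- The `q × q` matrix `α_k⁺`: first `q-1` rows of the identity, last row
`(-a_k^{(1)}, …, -a_k^{(q)})`. -/
def alphaP (q : ℕ) (a : ℤ → ℤ → ℂ) (k : ℕ) : Matrix (Fin q) (Fin q) LS := fun i j =>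
  if (i : ℕ) = q - 1 then -CLS (a (((j : ℕ) : ℤ) + 1) (k : ℤ))
  else if i = j then 1 else 0

/-- The `p × p` matrix `α_k⁻`: first `p-1` columns of the identity, last column
`(a_k^{(-1)}, …, a_k^{(-p)})ᵀ`. -/
def alphaM (p : ℕ) (a : ℤ → ℤ → ℂ) (k : ℕ) : Matrix (Fin p) (Fin p) LS := fun i j =>
  if (j : ℕ) = p - 1 then CLS (a (-(((i : ℕ) : ℤ) + 1)) (k : ℤ))
  else if i = j then 1 else 0

/-- `F_r(z)`: the `q × p` matrix of resolvent series of `H^{[r]}` (delete the first `r` rows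
and columns of `H`); `F_0 = F`. -/
def Fmat (p q : ℕ) (a : ℤ → ℤ → ℂ) (r : ℕ) : Matrix (Fin q) (Fin p) LS := fun i j =>
  gen fun n => onePow (fun i' j' => Hmat p q a (i' + r) (j' + r)) q n (i : ℕ) (j : ℕ)

/-- The transformation `τ_{α,k}(X) = T⁻¹(α_k(z) + α_k⁺ X α_k⁻)`. -/
def tauAlpha (p q : ℕ) (hq : 0 < q) (hp : 0 < p) (a : ℤ → ℤ → ℂ) (k : ℕ)
    (X : Matrix (Fin q) (Fin p) LS) : Matrix (Fin q) (Fin p) LS :=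
  Tinv hq hp (alphaZ q p a k + alphaP q a k * X * alphaM p a k)

/-- The banded matrix `E`: `E_{i,j} = a_{-(max(i,j)+1)}^{(j-i)}` when `-p ≤ j-i ≤ q`. -/
def Emat (p q : ℕ) (a : ℤ → ℤ → ℂ) (i j : ℕ) : ℂ :=
  if -(p : ℤ) ≤ (j : ℤ) - (i : ℤ) ∧ (j : ℤ) - (i : ℤ) ≤ (q : ℤ) then
    a ((j : ℤ) - (i : ℤ)) (-((max i j : ℕ) : ℤ) - 1) else 0

/-- `V_r(z)`: the `q × p` matrix of resolvent series of `E^{[r]}` (delete the first `r` rows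
and columns of `E`). -/
def Vmatr (p q : ℕ) (a : ℤ → ℤ → ℂ) (r : ℕ) : Matrix (Fin q) (Fin p) LS := fun i j =>
  gen fun n => onePow (fun i' j' => Emat p q a (i' + r) (j' + r)) q n (i : ℕ) (j : ℕ)

/-- `V(z)`: the `q × p` matrix with `(i,j)` entry `V_{-(j+1),-(i+1)}(z)`. -/
def VmatV (p q : ℕ) (a : ℤ → ℤ → ℂ) : Matrix (Fin q) (Fin p) LS := fun i j =>
  Vser p q a (-(((j : ℕ) : ℤ) + 1)) (-(((i : ℕ) : ℤ) + 1))

/-- The `q × p` matrix `ν_k(z)`: only nonzero entry `z - a_{-(k+1)}^{(0)}` at `(q-1,p-1)`. -/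
def nuZ (p q : ℕ) (a : ℤ → ℤ → ℂ) (k : ℕ) : Matrix (Fin q) (Fin p) LS := fun i j =>
  if (i : ℕ) = q - 1 ∧ (j : ℕ) = p - 1 then zLS - CLS (a 0 (-((k : ℤ) + 1))) else 0

/-- The `q × q` matrix `ν_k⁺`: identity except the last row, whose `i`-th entry (1-based) is
`-a_{-(k+i+1)}^{(i)}`. -/
def nuP (q : ℕ) (a : ℤ → ℤ → ℂ) (k : ℕ) : Matrix (Fin q) (Fin q) LS := fun i j =>
  if (i : ℕ) = q - 1 then -CLS (a (((j : ℕ) : ℤ) + 1) (-((k : ℤ) + ((j : ℕ) : ℤ) + 2)))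
  else if i = j then 1 else 0

/-- The `p × p` matrix `ν_k⁻`: identity except the last column, whose `j`-th entry (1-based) is
`a_{-(k+j+1)}^{(-j)}`. -/
def nuM (p : ℕ) (a : ℤ → ℤ → ℂ) (k : ℕ) : Matrix (Fin p) (Fin p) LS := fun i j =>
  if (j : ℕ) = p - 1 then CLS (a (-(((i : ℕ) : ℤ) + 1)) (-((k : ℤ) + ((i : ℕ) : ℤ) + 2)))
  else if i = j then 1 else 0

/-- The transformation `τ_{ν,k}(X) = T⁻¹(ν_k(z) + ν_k⁺ X ν_k⁻)`. -/
def tauNu (p q : ℕ) (hq : 0 < q) (hp : 0 < p) (a : ℤ → ℤ → ℂ) (k : ℕ)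
    (X : Matrix (Fin q) (Fin p) LS) : Matrix (Fin q) (Fin p) LS :=
  Tinv hq hp (nuZ p q a k + nuP q a k * X * nuM p a k)


/-!
Reading a path that stays at heights `≤ -1` backwards and relabelling height `-(i+1)` as `i`
turns its weight into a product of entries of `E`, so `V = V_0`.

For the continued fraction, split every walk of `E^{[k]}` at its visits to the index `0`. A walk
starting at `i + 1` either never visits `0`, and is then a walk of `E^{[k+1]}`, or it first hits
`0` after leaving `E^{[k+1]}`; symmetrically for walks ending at `j + 1`. In terms of resolvent
series this expresses every entry of `V_k` through `V_{k+1}` and `(V_k)_{0,0}`, together with the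
Schur-complement identity `1 / (V_k)_{0,0} = z - e_{0,0} - ∑ᵢ e_{0,i+1} Rᵢ`, where
`Rᵢ = ∑ⱼ (V_{k+1})_{i,j} e_{j+1,0}` and `e = E^{[k]}`. These identities say
exactly that `T(V_k) = ν_k(z) + ν_k⁺ V_{k+1} ν_k⁻`, i.e. `τ_{ν,k}(V_{k+1}) = V_k`, and the
composition telescopes.
-/

section GeneratingSeries

lemma gen_eq_ofPowerSeries (c : ℕ → ℂ) :
    gen c = HahnSeries.ofPowerSeries ℤ ℂ (PowerSeries.X * PowerSeries.mk c) := by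
  rw [gen, map_mul, HahnSeries.ofPowerSeries_X]

lemma gen_add (c d : ℕ → ℂ) : gen (fun n => c n + d n) = gen c + gen d := by
  simp only [gen_eq_ofPowerSeries, ← map_add, ← mul_add]
  rfl

lemma gen_zero : gen (fun _ => 0) = 0 := by
  rw [gen_eq_ofPowerSeries, show PowerSeries.mk (fun _ => (0 : ℂ)) = 0 from rfl, mul_zero,
    map_zero]

lemma gen_sum {α : Type*} (s : Finset α) (c : α → ℕ → ℂ) :
    gen (fun n => ∑ x ∈ s, c x n) = ∑ x ∈ s, gen (c x) := by
  induction s using Finset.cons_induction with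
  | empty => simpa using gen_zero
  | cons x s hx ih => simp only [Finset.sum_cons, gen_add, ih]

lemma CLS_mul_gen (e : ℂ) (c : ℕ → ℂ) : CLS e * gen c = gen (fun n => e * c n) := by
  rw [gen_eq_ofPowerSeries, gen_eq_ofPowerSeries, CLS, ← HahnSeries.ofPowerSeries_C (Γ := ℤ),
    ← map_mul, mul_left_comm]
  congr 3
  ext n
  simp [PowerSeries.coeff_C_mul]

lemma gen_mul_CLS (e : ℂ) (c : ℕ → ℂ) : gen c * CLS e = gen (fun n => c n * e) := by
  simp only [mul_comm _ (CLS e), CLS_mul_gen, mul_comm e]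

/-- The extra factor `z⁻¹` of each series shifts the Cauchy product by one. -/
lemma gen_mul_gen (c d : ℕ → ℂ) :
    gen c * gen d = gen (fun n => ∑ l ∈ Finset.range n, c l * d (n - 1 - l)) := by
  have hconv : PowerSeries.mk (fun n => ∑ l ∈ Finset.range n, c l * d (n - 1 - l)) =
      PowerSeries.X * (PowerSeries.mk c * PowerSeries.mk d) := by
    ext (_ | n)
    · simp
    · rw [PowerSeries.coeff_succ_X_mul, PowerSeries.coeff_mul,
        Finset.Nat.sum_antidiagonal_eq_sum_range_succ_mk]
      simp
  simp only [gen_eq_ofPowerSeries, ← map_mul, hconv]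
  ring_nf

lemma zLS_mul_gen (c : ℕ → ℂ) : zLS * gen c = CLS (c 0) + gen (fun n => c (n + 1)) := by
  have hz : zLS * gen c = HahnSeries.ofPowerSeries ℤ ℂ (PowerSeries.mk c) := by
    rw [gen, zLS, ← mul_assoc, HahnSeries.single_mul_single]
    norm_num [HahnSeries.single_zero_one]
  rw [hz, gen_eq_ofPowerSeries, CLS, ← HahnSeries.ofPowerSeries_C (Γ := ℤ), ← map_add]
  congr 1
  ext (_ | n) <;> simp [PowerSeries.coeff_succ_X_mul]

lemma gen_ne_zero {c : ℕ → ℂ} (h : c 0 ≠ 0) : gen c ≠ 0 := by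
  rw [gen_eq_ofPowerSeries, map_ne_zero_iff _ HahnSeries.ofPowerSeries_injective]
  intro h0
  exact h (by simpa [PowerSeries.coeff_succ_X_mul] using congrArg (PowerSeries.coeff 1) h0)

end GeneratingSeries

section BandedPowers

def BandedAbove (M : ℕ → ℕ → ℂ) (B : ℕ) : Prop := ∀ i r, i + B < r → M i r = 0

def BandedBelow (M : ℕ → ℕ → ℂ) (B : ℕ) : Prop := ∀ i r, r + B < i → M i r = 0

def shiftM (M : ℕ → ℕ → ℂ) : ℕ → ℕ → ℂ := fun i j => M (i + 1) (j + 1)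

variable {M : ℕ → ℕ → ℂ} {B B₂ : ℕ}

lemma BandedAbove.shiftM (h : BandedAbove M B) : BandedAbove (shiftM M) B :=
  fun i r hr => h (i + 1) (r + 1) (by omega)

lemma BandedBelow.shiftM (h : BandedBelow M B) : BandedBelow (shiftM M) B :=
  fun i r hr => h (i + 1) (r + 1) (by omega)

lemma onePow_zero_apply (M : ℕ → ℕ → ℂ) (B i j : ℕ) :
    onePow M B 0 i j = if i = j then 1 else 0 := rfl

lemma onePow_succ (M : ℕ → ℕ → ℂ) (B n i j : ℕ) :
    onePow M B (n + 1) i j = ∑ r ∈ Finset.range (i + B + 1), M i r * onePow M B n r j := rfl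

lemma onePow_one (M : ℕ → ℕ → ℂ) (B i j : ℕ) (hj : j < i + B + 1) :
    onePow M B 1 i j = M i j := by
  rw [onePow_succ, Finset.sum_eq_single_of_mem j (Finset.mem_range.mpr hj)]
  · simp [onePow_zero_apply]
  · intro r _ hr
    rw [onePow_zero_apply, if_neg hr, mul_zero]

lemma onePow_succ_eq_sum_mul (hU : BandedAbove M B) (n i j T : ℕ) (hT : i + n * B + B + 1 ≤ T) :
    onePow M B (n + 1) i j = ∑ r ∈ Finset.range T, onePow M B n i r * M r j := by
  induction n generalizing i with
  | zero =>
    rw [Finset.sum_eq_single_of_mem (f := fun r => onePow M B 0 i r * M r j) i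
      (Finset.mem_range.mpr (by omega)), onePow_zero_apply, if_pos rfl, one_mul]
    · rcases lt_or_ge j (i + B + 1) with hj | hj
      · exact onePow_one M B i j hj
      · rw [onePow_succ, hU i j (by omega)]
        refine Finset.sum_eq_zero fun r hr => ?_
        rw [Finset.mem_range] at hr
        rw [onePow_zero_apply, if_neg (by omega), mul_zero]
    · intro r _ hr
      rw [onePow_zero_apply, if_neg (Ne.symm hr), zero_mul]
  | succ n ih =>
    have hrow : ∀ r ∈ Finset.range (i + B + 1), M i r * onePow M B (n + 1) r j =
        ∑ s ∈ Finset.range T, M i r * (onePow M B n r s * M s j) := by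
      intro r hr
      rw [Finset.mem_range] at hr
      rw [ih r (by rw [Nat.succ_mul] at hT; omega), Finset.mul_sum]
    rw [onePow_succ, Finset.sum_congr rfl hrow, Finset.sum_comm]
    simp only [onePow_succ, Finset.sum_mul, mul_assoc]

lemma onePow_transpose (hU : BandedAbove M B) (hL : BandedBelow M B₂) (n i j : ℕ) :
    onePow (fun x y => M y x) B₂ n j i = onePow M B n i j := by
  induction n generalizing i j with
  | zero => simp only [onePow_zero_apply, eq_comm]
  | succ n ih =>
    have hT := le_max_right (j + B₂ + 1) (i + n * B + B + 1)
    rw [onePow_succ_eq_sum_mul hU n i j _ hT, onePow_succ,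
      ← Finset.sum_subset (Finset.range_subset_range.mpr (le_max_left _ _))]
    · exact Finset.sum_congr rfl fun r _ => by rw [ih, mul_comm]
    · intro r _ hr
      rw [hL r j (by simp only [Finset.mem_range] at hr; omega), mul_zero]

/-- The part of `(M ^ n)_{i + 1, x}` coming from walks that never visit `0`. -/
def avoidZero (M : ℕ → ℕ → ℂ) (B n i x : ℕ) : ℂ :=
  if x = 0 then 0 else onePow (shiftM M) B n i (x - 1)

/-- Total weight of the walks of length `l + 1` from `i + 1` that visit `0` only at the end. -/
def firstHit (M : ℕ → ℕ → ℂ) (B B₂ i l : ℕ) : ℂ :=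
  ∑ j ∈ Finset.range B₂, onePow (shiftM M) B l i j * M (j + 1) 0

lemma firstHit_zero (hL : BandedBelow M B₂) (i : ℕ) : firstHit M B B₂ i 0 = M (i + 1) 0 := by
  unfold firstHit
  rcases lt_or_ge i B₂ with hi | hi
  · rw [Finset.sum_eq_single_of_mem i (Finset.mem_range.mpr hi)]
    · simp [onePow_zero_apply]
    · intro j _ hj
      rw [onePow_zero_apply, if_neg (Ne.symm hj), zero_mul]
  · rw [hL (i + 1) 0 (by omega)]
    refine Finset.sum_eq_zero fun j hj => ?_
    rw [Finset.mem_range] at hj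
    rw [onePow_zero_apply, if_neg (by omega), zero_mul]

lemma firstHit_succ (i l : ℕ) :
    firstHit M B B₂ i (l + 1) =
      ∑ r ∈ Finset.range (i + B + 1), M (i + 1) (r + 1) * firstHit M B B₂ r l := by
  simp only [firstHit, onePow_succ, shiftM, Finset.sum_mul, Finset.mul_sum, mul_assoc]
  exact Finset.sum_comm

/-- Decomposition of the walks starting at `i + 1` according to their first visit to `0`. -/
lemma onePow_succ_left (hL : BandedBelow M B₂) (n i x : ℕ) :
    onePow M B n (i + 1) x =
      avoidZero M B n i x +
        ∑ l ∈ Finset.range n, firstHit M B B₂ i l * onePow M B (n - 1 - l) 0 x := by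
  induction n generalizing i with
  | zero => rcases x with _ | x <;> simp [avoidZero, onePow_zero_apply]
  | succ n ih =>
    have havoid : avoidZero M B (n + 1) i x =
        ∑ r ∈ Finset.range (i + B + 1), M (i + 1) (r + 1) * avoidZero M B n r x := by
      rcases x with _ | x <;> simp [avoidZero, onePow_succ, shiftM]
    have hhit :
        ∑ l ∈ Finset.range (n + 1), firstHit M B B₂ i l * onePow M B (n + 1 - 1 - l) 0 x =
        ∑ r ∈ Finset.range (i + B + 1), M (i + 1) (r + 1) *
            ∑ l ∈ Finset.range n, firstHit M B B₂ r l * onePow M B (n - 1 - l) 0 x +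
          M (i + 1) 0 * onePow M B n 0 x := by
      rw [Finset.sum_range_succ', firstHit_zero hL, Nat.add_sub_cancel, Nat.sub_zero]
      simp only [Finset.mul_sum, ← mul_assoc]
      rw [Finset.sum_comm]
      refine congrArg (· + _) (Finset.sum_congr rfl fun l _ => ?_)
      rw [firstHit_succ, Finset.sum_mul, show n - (l + 1) = n - 1 - l by omega]
    rw [onePow_succ, show i + 1 + B + 1 = i + B + 1 + 1 by omega, Finset.sum_range_succ',
      havoid, hhit]
    simp only [ih, mul_add, Finset.sum_add_distrib]
    ring

/-- Last-visit decomposition, obtained from `onePow_succ_left` for the transpose. -/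
lemma onePow_zero_succ (hU : BandedAbove M B) (hL : BandedBelow M B₂) (n j : ℕ) :
    onePow M B n 0 (j + 1) =
      ∑ l ∈ Finset.range n,
        (∑ i ∈ Finset.range B, onePow (shiftM M) B l i j * M 0 (i + 1)) *
          onePow M B (n - 1 - l) 0 0 := by
  have hUt : BandedBelow (fun x y => M y x) B := fun i r h => hU r i h
  rw [← onePow_transpose hU hL, onePow_succ_left hUt]
  simp only [avoidZero, if_true, zero_add]
  refine Finset.sum_congr rfl fun l _ => ?_
  rw [onePow_transpose hU hL]
  congr 1
  exact Finset.sum_congr rfl fun i _ => by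
    rw [show shiftM (fun x y => M y x) = fun x y => shiftM M y x from rfl,
      onePow_transpose hU.shiftM hL.shiftM]

lemma onePow_succ_zero_zero (hL : BandedBelow M B₂) (n : ℕ) :
    onePow M B (n + 1) 0 0 =
      M 0 0 * onePow M B n 0 0 +
        ∑ i ∈ Finset.range B, M 0 (i + 1) *
          ∑ l ∈ Finset.range n, firstHit M B B₂ i l * onePow M B (n - 1 - l) 0 0 := by
  rw [onePow_succ, zero_add, Finset.sum_range_succ', add_comm]
  simp only [onePow_succ_left hL n, avoidZero, if_true, zero_add]

end BandedPowers

section Resolvent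

/-- The `(i, j)` entry of the resolvent `(z - M)⁻¹`. -/
def res (M : ℕ → ℕ → ℂ) (B i j : ℕ) : LS := gen fun n => onePow M B n i j

def rowHit (M : ℕ → ℕ → ℂ) (B B₂ i : ℕ) : LS :=
  ∑ j ∈ Finset.range B₂, res (shiftM M) B i j * CLS (M (j + 1) 0)

def colHit (M : ℕ → ℕ → ℂ) (B j : ℕ) : LS :=
  ∑ i ∈ Finset.range B, CLS (M 0 (i + 1)) * res (shiftM M) B i j

variable {M : ℕ → ℕ → ℂ} {B B₂ : ℕ}

lemma gen_firstHit (i : ℕ) : gen (fun l => firstHit M B B₂ i l) = rowHit M B B₂ i := by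
  simp only [firstHit, gen_sum, rowHit, res, gen_mul_CLS]

lemma res_succ_left (hL : BandedBelow M B₂) (i x : ℕ) :
    res M B (i + 1) x = gen (fun n => avoidZero M B n i x) + rowHit M B B₂ i * res M B 0 x := by
  simp only [res, onePow_succ_left hL, gen_add, ← gen_firstHit, gen_mul_gen]

lemma res_succ_succ (hL : BandedBelow M B₂) (i j : ℕ) :
    res M B (i + 1) (j + 1) = res (shiftM M) B i j + rowHit M B B₂ i * res M B 0 (j + 1) := by
  rw [res_succ_left hL]
  simp [avoidZero, res]

lemma res_succ_zero (hL : BandedBelow M B₂) (i : ℕ) :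
    res M B (i + 1) 0 = rowHit M B B₂ i * res M B 0 0 := by
  rw [res_succ_left hL]
  simp [avoidZero, gen_zero]

lemma res_zero_succ (hU : BandedAbove M B) (hL : BandedBelow M B₂) (j : ℕ) :
    res M B 0 (j + 1) = colHit M B j * res M B 0 0 := by
  have hcol : colHit M B j =
      gen (fun l => ∑ i ∈ Finset.range B, onePow (shiftM M) B l i j * M 0 (i + 1)) := by
    simp only [colHit, res, gen_sum, CLS_mul_gen, mul_comm (M 0 _)]
  simp only [hcol, res, gen_mul_gen, onePow_zero_succ hU hL]

lemma res_zero_zero_ne_zero : res M B 0 0 ≠ 0 :=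
  gen_ne_zero (by simp [onePow_zero_apply])

/-- The Schur-complement identity for the `(0,0)` entry of the resolvent. -/
lemma res_zero_zero_mul_schur (hL : BandedBelow M B₂) :
    res M B 0 0 *
        (zLS - CLS (M 0 0) - ∑ i ∈ Finset.range B, CLS (M 0 (i + 1)) * rowHit M B B₂ i) =
      1 := by
  have hz : zLS * res M B 0 0 =
      1 + CLS (M 0 0) * res M B 0 0 +
        ∑ i ∈ Finset.range B, CLS (M 0 (i + 1)) * (rowHit M B B₂ i * res M B 0 0) := by
    simp only [res, ← gen_firstHit, gen_mul_gen, CLS_mul_gen, ← gen_sum, zLS_mul_gen,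
      onePow_succ_zero_zero hL, gen_add]
    simp [onePow_zero_apply, CLS, add_assoc]
  rw [mul_sub, mul_sub, mul_comm _ zLS, hz, Finset.mul_sum]
  simp only [mul_comm (res M B 0 0), mul_assoc]
  ring

end Resolvent

section TransformT

variable {F : Type*} [Field F] {q p : ℕ} (hq : 0 < q) (hp : 0 < p)

lemma Tinv_Tmat {A : Matrix (Fin q) (Fin p) F} (hA : A ⟨0, hq⟩ ⟨0, hp⟩ ≠ 0) :
    Tinv hq hp (Tmat hq hp A) = A := by
  ext ⟨_ | i, hi⟩ ⟨_ | j, hj⟩ <;>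
    simp [Tinv, Tmat, show ¬ q - 1 + 1 < q by omega, show ¬ p - 1 + 1 < p by omega, hi, hj] <;>
    field_simp
  ring

end TransformT

section ResolventBlock

variable (M : ℕ → ℕ → ℂ) (q p : ℕ)

def resBlock : Matrix (Fin q) (Fin p) LS := fun i j => res M q i j

def cornerMat : Matrix (Fin q) (Fin p) LS := fun i j =>
  if (i : ℕ) = q - 1 ∧ (j : ℕ) = p - 1 then zLS - CLS (M 0 0) else 0

def lastRowMat : Matrix (Fin q) (Fin q) LS := fun i j =>
  if (i : ℕ) = q - 1 then -CLS (M 0 (j + 1)) else if i = j then 1 else 0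

def lastColMat : Matrix (Fin p) (Fin p) LS := fun i j =>
  if (j : ℕ) = p - 1 then CLS (M (i + 1) 0) else if i = j then 1 else 0

variable {M q p}

lemma lastRowMat_mul_apply (X : Matrix (Fin q) (Fin p) LS) (i : Fin q) (j : Fin p) :
    (lastRowMat M q * X) i j =
      if (i : ℕ) = q - 1 then ∑ i' : Fin q, -CLS (M 0 (i' + 1)) * X i' j else X i j := by
  split_ifs with hi <;> simp [Matrix.mul_apply, lastRowMat, hi]

lemma mul_lastColMat_apply (X : Matrix (Fin q) (Fin p) LS) (i : Fin q) (j : Fin p) :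
    (X * lastColMat M p) i j =
      if (j : ℕ) = p - 1 then ∑ j' : Fin p, X i j' * CLS (M (j' + 1) 0) else X i j := by
  split_ifs with hj <;> simp [Matrix.mul_apply, lastColMat, hj, eq_comm]

lemma one_div_res_zero_zero (hL : BandedBelow M p) :
    1 / res M q 0 0 = zLS - CLS (M 0 0) +
      ∑ j : Fin p,
        (∑ i : Fin q, -CLS (M 0 (i + 1)) * res (shiftM M) q i j) * CLS (M (j + 1) 0) := by
  have hsum : ∑ j : Fin p, (∑ i : Fin q, -CLS (M 0 (i + 1)) * res (shiftM M) q i j) *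
      CLS (M (j + 1) 0) = -∑ i ∈ Finset.range q, CLS (M 0 (i + 1)) * rowHit M q p i := by
    simp only [rowHit, Finset.mul_sum, Finset.sum_mul, ← Finset.sum_neg_distrib, Finset.sum_range]
    rw [Finset.sum_comm]
    exact Finset.sum_congr rfl fun _ _ => Finset.sum_congr rfl fun _ _ => by ring
  rw [hsum, ← sub_eq_add_neg]
  exact (eq_one_div_of_mul_eq_one_right (res_zero_zero_mul_schur hL)).symm

/-- One step of the matrix continued fraction for the resolvent of a banded matrix. -/
theorem Tmat_resBlock (hq : 0 < q) (hp : 0 < p) (hU : BandedAbove M q)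
    (hL : BandedBelow M p) :
    Tmat hq hp (resBlock M q p) =
      cornerMat M q p + lastRowMat M q * resBlock (shiftM M) q p * lastColMat M p := by
  have h00 := res_zero_zero_ne_zero (M := M) (B := q)
  ext ⟨i, hi⟩ ⟨j, hj⟩ : 1
  simp only [Matrix.add_apply, mul_lastColMat_apply, lastRowMat_mul_apply, cornerMat]
  by_cases hi' : i + 1 < q <;> by_cases hj' : j + 1 < p
  · simp only [Tmat, hi', hj', dif_pos, show i ≠ q - 1 by omega, show j ≠ p - 1 by omega,
      false_and, if_false, zero_add, resBlock]
    rw [res_succ_succ hL, res_succ_zero hL, res_zero_succ hU hL, div_eq_iff h00]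
    ring
  · obtain rfl : j = p - 1 := by omega
    simp only [Tmat, hi', hj', dif_pos, dif_neg, not_false_eq_true, show i ≠ q - 1 by omega,
      false_and, if_false, if_true, zero_add, resBlock]
    rw [res_succ_zero hL, mul_div_cancel_right₀ _ h00, rowHit,
      Fin.sum_univ_eq_sum_range (fun j' => res (shiftM M) q i j' * CLS (M (j' + 1) 0))]
  · obtain rfl : i = q - 1 := by omega
    simp only [Tmat, hi', hj', dif_pos, dif_neg, not_false_eq_true, show j ≠ p - 1 by omega,
      and_false, if_false, if_true, zero_add, resBlock]
    rw [res_zero_succ hU hL, div_eq_iff h00, colHit,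
      ← Fin.sum_univ_eq_sum_range (fun i' => CLS (M 0 (i' + 1)) * res (shiftM M) q i' j)]
    simp only [Finset.sum_mul, ← Finset.sum_neg_distrib]
    exact Finset.sum_congr rfl fun _ _ => by ring
  · obtain rfl : i = q - 1 := by omega
    obtain rfl : j = p - 1 := by omega
    simp only [Tmat, hi', hj', dif_neg, not_false_eq_true, and_self, if_true, resBlock]
    exact one_div_res_zero_zero hL

end ResolventBlock

section TauStep

variable {M : ℕ → ℕ → ℂ} {q p : ℕ} (hq : 0 < q) (hp : 0 < p)

lemma Tmat_resBlock_corner_ne_zero :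
    Tmat hq hp (resBlock M q p)
      ⟨q - 1, Nat.sub_lt hq one_pos⟩ ⟨p - 1, Nat.sub_lt hp one_pos⟩ ≠ 0 := by
  simpa [Tmat, resBlock, show ¬ q - 1 + 1 < q by omega, show ¬ p - 1 + 1 < p by omega] using
    res_zero_zero_ne_zero (M := M) (B := q)

lemma Tinv_resBlock (hU : BandedAbove M q) (hL : BandedBelow M p) :
    Tinv hq hp (cornerMat M q p + lastRowMat M q * resBlock (shiftM M) q p * lastColMat M p) =
      resBlock M q p := by
  rw [← Tmat_resBlock hq hp hU hL]
  exact Tinv_Tmat hq hp res_zero_zero_ne_zero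

end TauStep

section TruncatedE

variable (p q : ℕ) (a : ℤ → ℤ → ℂ)

/-- `E^{[k]}`. -/
def Etrunc (k : ℕ) : ℕ → ℕ → ℂ := fun i j => Emat p q a (i + k) (j + k)

lemma Etrunc_bandedAbove (k : ℕ) : BandedAbove (Etrunc p q a k) q := by
  intro i r h
  simp only [Etrunc, Emat]
  rw [if_neg (by omega)]

lemma Etrunc_bandedBelow (k : ℕ) : BandedBelow (Etrunc p q a k) p := by
  intro i r h
  simp only [Etrunc, Emat]
  rw [if_neg (by omega)]

lemma shiftM_Etrunc (k : ℕ) : shiftM (Etrunc p q a k) = Etrunc p q a (k + 1) := by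
  funext i j
  simp only [shiftM, Etrunc, Nat.add_right_comm _ 1 k, Nat.add_assoc]

lemma Vmatr_eq_resBlock (k : ℕ) : Vmatr p q a k = resBlock (Etrunc p q a k) q p := rfl

lemma Etrunc_zero_zero (k : ℕ) : Etrunc p q a k 0 0 = a 0 (-((k : ℤ) + 1)) := by
  simp only [Etrunc, Emat, zero_add, max_self]
  rw [if_pos (by omega)]
  congr 1 <;> ring

lemma Etrunc_zero_succ (k i : ℕ) (hi : i < q) :
    Etrunc p q a k 0 (i + 1) = a ((i : ℤ) + 1) (-((k : ℤ) + (i : ℤ) + 2)) := by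
  simp only [Etrunc, Emat, zero_add, show max k (i + 1 + k) = i + 1 + k by omega]
  rw [if_pos (by omega)]
  congr 1 <;> push_cast <;> ring

lemma Etrunc_succ_zero (k j : ℕ) (hj : j < p) :
    Etrunc p q a k (j + 1) 0 = a (-((j : ℤ) + 1)) (-((k : ℤ) + (j : ℤ) + 2)) := by
  simp only [Etrunc, Emat, zero_add, show max (j + 1 + k) k = j + 1 + k by omega]
  rw [if_pos (by omega)]
  congr 1 <;> push_cast <;> ring

lemma nuZ_eq_cornerMat (k : ℕ) : nuZ p q a k = cornerMat (Etrunc p q a k) q p := by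
  ext i j : 1
  simp only [nuZ, cornerMat, Etrunc_zero_zero]

lemma nuP_eq_lastRowMat (k : ℕ) : nuP q a k = lastRowMat (Etrunc p q a k) q := by
  ext i j : 1
  simp only [nuP, lastRowMat, Etrunc_zero_succ p q a k j j.isLt]

lemma nuM_eq_lastColMat (k : ℕ) : nuM p a k = lastColMat (Etrunc p q a k) p := by
  ext i j : 1
  simp only [nuM, lastColMat, Etrunc_succ_zero p q a k i i.isLt]

lemma tauNu_Vmatr_succ (hq : 0 < q) (hp : 0 < p) (k : ℕ) :
    tauNu p q hq hp a k (Vmatr p q a (k + 1)) = Vmatr p q a k := by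
  rw [tauNu, nuZ_eq_cornerMat, nuP_eq_lastRowMat, nuM_eq_lastColMat, Vmatr_eq_resBlock,
    Vmatr_eq_resBlock, ← shiftM_Etrunc]
  exact Tinv_resBlock hq hp (Etrunc_bandedAbove p q a k) (Etrunc_bandedBelow p q a k)

lemma nuZ_add_nuP_mul_Vmatr_mul_nuM_corner_ne_zero (hq : 0 < q) (hp : 0 < p) (k : ℕ) :
    (nuZ p q a k + nuP q a k * Vmatr p q a (k + 1) * nuM p a k)
      ⟨q - 1, Nat.sub_lt hq one_pos⟩ ⟨p - 1, Nat.sub_lt hp one_pos⟩ ≠ 0 := by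
  rw [nuZ_eq_cornerMat, nuP_eq_lastRowMat, nuM_eq_lastColMat, Vmatr_eq_resBlock, ← shiftM_Etrunc,
    ← Tmat_resBlock hq hp (Etrunc_bandedAbove p q a k) (Etrunc_bandedBelow p q a k)]
  exact Tmat_resBlock_corner_ne_zero hq hp

end TruncatedE

section Paths

variable (p q : ℕ) (a : ℤ → ℤ → ℂ)

lemma mem_steps {n : ℕ} (s : Fin n → ℤ) :
    s ∈ steps p q n ↔ ∀ t, s t ∈ Finset.Icc (-(p : ℤ)) q :=
  Fintype.mem_piFinset

lemma sum_steps_succ {β : Type*} [AddCommMonoid β] (n : ℕ) (f : (Fin (n + 1) → ℤ) → β) :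
    ∑ s ∈ steps p q (n + 1), f s =
      ∑ s ∈ steps p q n, ∑ d ∈ Finset.Icc (-(p : ℤ)) q, f (Fin.snoc s d) := by
  rw [← Finset.sum_product']
  refine Finset.sum_nbij' (fun s => (Fin.init s, s (Fin.last n))) (fun x => Fin.snoc x.1 x.2)
    ?_ ?_ ?_ ?_ ?_
  · intro s hs
    rw [mem_steps] at hs
    exact Finset.mem_product.mpr ⟨(mem_steps p q _).mpr fun t => hs _, hs _⟩
  · intro x hx
    rw [Finset.mem_product, mem_steps] at hx
    rw [mem_steps]
    exact Fin.lastCases (by simpa using hx.2) (fun t => by simpa using hx.1 t)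
  · intro s _
    exact Fin.snoc_init_self s
  · intro x _
    simp
  · intro s _
    rw [Fin.snoc_init_self]

variable {p q a}

lemma ext_snoc_of_lt {n : ℕ} (s : Fin n → ℤ) (d : ℤ) {t : ℕ} (ht : t < n) :
    _root_.ext (Fin.snoc s d) t = _root_.ext s t := by
  simp only [_root_.ext, dif_pos ht, dif_pos (Nat.lt_succ_of_lt ht)]
  exact Fin.snoc_castSucc (α := fun _ => ℤ) (i := ⟨t, ht⟩) ..

lemma ext_snoc_self {n : ℕ} (s : Fin n → ℤ) (d : ℤ) : _root_.ext (Fin.snoc s d) n = d := by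
  simp only [_root_.ext, dif_pos (Nat.lt_succ_self n)]
  exact Fin.snoc_last (α := fun _ => ℤ) ..

lemma hgt_snoc_of_le {n : ℕ} (i : ℤ) (s : Fin n → ℤ) (d : ℤ) {k : ℕ} (hk : k ≤ n) :
    hgt i (_root_.ext (Fin.snoc s d)) k = hgt i (_root_.ext s) k := by
  unfold hgt
  congr 1
  exact Finset.sum_congr rfl fun t ht => ext_snoc_of_lt s d (by simp at ht; omega)

lemma hgt_snoc_succ {n : ℕ} (i : ℤ) (s : Fin n → ℤ) (d : ℤ) :
    hgt i (_root_.ext (Fin.snoc s d)) (n + 1) = hgt i (_root_.ext s) n + d := by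
  rw [← hgt_snoc_of_le i s d le_rfl, hgt, hgt, Finset.sum_range_succ, ext_snoc_self, add_assoc]

lemma wgt_snoc {n : ℕ} (i : ℤ) (s : Fin n → ℤ) (d : ℤ) :
    wgt a (n + 1) i (_root_.ext (Fin.snoc s d)) =
      wgt a n i (_root_.ext s) * stepW a (hgt i (_root_.ext s) n) d := by
  rw [wgt, Finset.prod_range_succ, ext_snoc_self, hgt_snoc_of_le i s d le_rfl, wgt]
  congr 1
  exact Finset.prod_congr rfl fun t ht => by
    rw [Finset.mem_range] at ht
    rw [hgt_snoc_of_le i s d ht.le, ext_snoc_of_lt s d ht]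

lemma forall_le_succ_hgt_snoc_le_iff {n : ℕ} (i : ℤ) (s : Fin n → ℤ) (d c : ℤ) :
    (∀ k ≤ n + 1, hgt i (_root_.ext (Fin.snoc s d)) k ≤ c) ↔
      (∀ k ≤ n, hgt i (_root_.ext s) k ≤ c) ∧ hgt i (_root_.ext s) n + d ≤ c := by
  refine ⟨fun h => ⟨fun k hk => ?_, ?_⟩, fun h k hk => ?_⟩
  · rw [← hgt_snoc_of_le i s d hk]
    exact h k (by omega)
  · rw [← hgt_snoc_succ]
    exact h (n + 1) le_rfl
  · rcases Nat.lt_or_ge k (n + 1) with hk' | hk'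
    · rw [hgt_snoc_of_le i s d (by omega)]
      exact h.1 k (by omega)
    · rw [show k = n + 1 by omega, hgt_snoc_succ]
      exact h.2

variable (p q a)

lemma Vpoly_of_nonneg (n : ℕ) (i : ℤ) {j : ℤ} (hj : 0 ≤ j) : Vpoly p q a n i j = 0 :=
  Finset.sum_eq_zero fun s _ => if_neg fun h => by have := h.2 n le_rfl; omega

lemma Vpoly_zero (i : ℤ) {j : ℤ} (hj : j ≤ -1) :
    Vpoly p q a 0 i j = if i = j then 1 else 0 := by
  simp only [Vpoly, steps, Fintype.piFinset_of_isEmpty, Finset.univ_unique,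
    Finset.sum_singleton, hgt, wgt, Finset.range_zero, Finset.sum_empty, Finset.prod_empty,
    add_zero, Nat.le_zero, forall_eq]
  by_cases h : i = j <;> simp [h, hj]

/-- `V_{[n,i,j]}` decomposed according to the last step of the path. -/
lemma Vpoly_succ (n : ℕ) (i : ℤ) {j : ℤ} (hj : j ≤ -1) :
    Vpoly p q a (n + 1) i j =
      ∑ d ∈ Finset.Icc (-(p : ℤ)) q, stepW a (j - d) d * Vpoly p q a n i (j - d) := by
  rw [Vpoly, sum_steps_succ, Finset.sum_comm]
  refine Finset.sum_congr rfl fun d _ => ?_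
  rw [Vpoly, Finset.mul_sum]
  refine Finset.sum_congr rfl fun s _ => ?_
  simp only [forall_le_succ_hgt_snoc_le_iff, hgt_snoc_succ, wgt_snoc]
  by_cases hend : hgt i (_root_.ext s) n = j - d
  · simp only [hend, sub_add_cancel, true_and, hj, and_true]
    split_ifs <;> ring
  · rw [if_neg (fun h => hend (by omega)), if_neg (fun h => hend h.1), mul_zero]

end Paths

section VEqV0

variable (p q : ℕ) (a : ℤ → ℤ → ℂ)

/-- A step of displacement `d` ending at height `-(i+1)` is the entry `E_{i, i+d}`. -/
lemma stepW_eq_Emat (i r : ℕ) (d : ℤ) (hr : (i : ℤ) + d = r) (hp : -(p : ℤ) ≤ d)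
    (hq : d ≤ q) : stepW a (-((i : ℤ) + 1) - d) d = Emat p q a i r := by
  rw [Emat, if_pos ⟨by omega, by omega⟩, stepW]
  split_ifs with hd
  · rw [show max i r = r by omega]
    congr 1 <;> omega
  · rw [show max i r = i by omega]
    congr 1 <;> omega

lemma Vpoly_eq_onePow_Emat (n i j : ℕ) :
    Vpoly p q a n (-((j : ℤ) + 1)) (-((i : ℤ) + 1)) = onePow (Emat p q a) q n i j := by
  induction n generalizing i with
  | zero =>
    rw [Vpoly_zero p q a _ (by omega), onePow_zero_apply]
    exact if_congr (by omega) rfl rfl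
  | succ n ih =>
    rw [Vpoly_succ p q a n _ (by omega), onePow_succ,
      ← Finset.sum_filter_of_ne (p := fun d : ℤ => 0 ≤ (i : ℤ) + d) fun d _ hne => by
        by_contra hd
        exact hne (by rw [Vpoly_of_nonneg p q a n _ (by omega), mul_zero]),
      ← Finset.sum_filter_of_ne (p := fun r : ℕ => (i : ℤ) ≤ r + p) fun r _ hne => by
        by_contra hr
        exact hne (by rw [Emat, if_neg (by omega), zero_mul])]
    refine Finset.sum_nbij' (fun d => ((i : ℤ) + d).toNat) (fun r => (r : ℤ) - i)
      ?_ ?_ ?_ ?_ ?_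
    · intro d hd
      simp only [Finset.mem_filter, Finset.mem_Icc, Finset.mem_range] at hd ⊢
      omega
    · intro r hr
      simp only [Finset.mem_filter, Finset.mem_Icc, Finset.mem_range] at hr ⊢
      omega
    · intro d hd
      simp only [Finset.mem_filter, Finset.mem_Icc] at hd
      omega
    · intro r hr
      simp only [Finset.mem_filter, Finset.mem_range] at hr
      omega
    · intro d hd
      simp only [Finset.mem_filter, Finset.mem_Icc] at hd
      rw [stepW_eq_Emat p q a i ((i : ℤ) + d).toNat d (by omega) hd.1.1 hd.1.2,
        show -((i : ℤ) + 1) - d = -((((i : ℤ) + d).toNat : ℤ) + 1) by omega, ih]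

lemma VmatV_eq_Vmatr_zero : VmatV p q a = Vmatr p q a 0 := by
  ext i j : 1
  exact congrArg gen (funext fun n => Vpoly_eq_onePow_Emat p q a n i j)

end VEqV0

section Chain

variable {M : Type*} (τ : ℕ → M → M) (k : ℕ) (X : M)

lemma chainFrom_self : chainFrom τ k X k = X := by
  rw [chainFrom, Nat.sub_self, List.range_zero, List.foldr_nil]

lemma chainFrom_of_lt {m : ℕ} (h : m < k) :
    chainFrom τ k X m = τ m (chainFrom τ k X (m + 1)) := by
  rw [chainFrom, chainFrom, show k - m = k - (m + 1) + 1 by omega, List.range_succ_eq_map,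
    List.foldr_cons, List.foldr_map, Nat.add_zero]
  simp only [Nat.succ_eq_add_one, Nat.add_assoc, Nat.add_comm 1]

lemma chainFrom_eq_of_forall {Y : ℕ → M} (hY : ∀ m, τ m (Y (m + 1)) = Y m) {m : ℕ}
    (hm : m ≤ k) : chainFrom τ k (Y k) m = Y m := by
  induction hd : k - m generalizing m with
  | zero => rw [show m = k by omega, chainFrom_self]
  | succ d ih => rw [chainFrom_of_lt τ k _ (by omega), ih (by omega) (by omega), hY]

end Chain

/-- **Proposition 6.4** (matrix continued fraction for `V(z)`): `V(z) = V_0(z)`, and for every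
`k ≥ 1` all transformations are defined and `V(z) = (τ_{ν,0} ∘ ⋯ ∘ τ_{ν,k-1})(V_k(z))`. -/
theorem matrix_continued_fraction_for_V
    (p q : ℕ) (hp : 0 < p) (hq : 0 < q) (a : ℤ → ℤ → ℂ) :
    VmatV p q a = Vmatr p q a 0 ∧
    ∀ k : ℕ, 1 ≤ k →
      (∀ m < k,
        (nuZ p q a m +
            nuP q a m * chainFrom (tauNu p q hq hp a) k (Vmatr p q a k) (m + 1) * nuM p a m)
            ⟨q - 1, Nat.sub_lt hq one_pos⟩ ⟨p - 1, Nat.sub_lt hp one_pos⟩ ≠ 0) ∧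
      VmatV p q a = chainFrom (tauNu p q hq hp a) k (Vmatr p q a k) 0 := by
  have hstep := tauNu_Vmatr_succ p q a hq hp
  refine ⟨VmatV_eq_Vmatr_zero p q a, fun k _ => ⟨fun m hm => ?_, ?_⟩⟩
  · rw [chainFrom_eq_of_forall _ k hstep hm]
    exact nuZ_add_nuP_mul_Vmatr_mul_nuM_corner_ne_zero p q a hq hp m
  · rw [chainFrom_eq_of_forall _ k hstep (Nat.zero_le k)]
    exact VmatV_eq_Vmatr_zero p q a
end
end

section
/- Let ℓ ≥ 1 be an integer and set N := ⌊pqℓ/(p+q)⌋ + max(p,q) + 1. If n ≥ 2N+1 and N ≤ i ≤ n−1−N, then D_{[ℓ,i,i,n]} = {γ + i : γ ∈ P_{[ℓ,0,0]}}, where γ + i denotes the path γ shifted i units upwards; in particular the map γ ↦ γ + i is a bijection from P_{[ℓ,0,0]} onto D_{[ℓ,i,i,n]}, and D_{[ℓ,i,i,n]} = P_{[ℓ,i,i]}. -/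
open scoped BigOperators
open Finset

noncomputable section

/-- The collection `P_{[ℓ,i,j]}` of all paths of length `ℓ` from `(0,i)` to `(ℓ,j)`, a path
being recorded as (starting height, step sequence). -/
def PsetP (p q ℓ : ℕ) (i j : ℤ) : Finset (ℤ × (Fin ℓ → ℤ)) :=
  ({i} ×ˢ steps p q ℓ).filter fun γ => hgt γ.1 (ext γ.2) ℓ = j

/-- The collection `D_{[ℓ,i,j,N]}` of paths of length `ℓ` from `(0,i)` to `(ℓ,j)` with all
heights in `{0, …, N-1}`, a path being recorded as (starting height, step sequence). -/
def DboxSetP (p q N ℓ : ℕ) (i j : ℤ) : Finset (ℤ × (Fin ℓ → ℤ)) :=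
  ({i} ×ˢ steps p q ℓ).filter fun γ =>
    hgt γ.1 (ext γ.2) ℓ = j ∧
      ∀ k ≤ ℓ, 0 ≤ hgt γ.1 (ext γ.2) k ∧ hgt γ.1 (ext γ.2) k ≤ (N : ℤ) - 1

/-- `(p + q) h = p h + q h ≤ p (k q) + q (m p)`; when `p + q = 0` both sides vanish. -/
lemma le_natCast_div_of_le_mul_of_le_mul {h : ℤ} {p q k m : ℕ}
    (hk : h ≤ k * q) (hm : h ≤ m * p) :
    h ≤ ((p * q * (k + m) / (p + q) : ℕ) : ℤ) := by
  rcases Nat.eq_zero_or_pos (p + q) with hpq | hpq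
  · obtain ⟨rfl, rfl⟩ : p = 0 ∧ q = 0 := by omega
    simpa using hk
  push_cast
  rw [Int.le_ediv_iff_mul_le (by exact_mod_cast hpq)]
  nlinarith [mul_le_mul_of_nonneg_left hk (Int.natCast_nonneg p),
    mul_le_mul_of_nonneg_left hm (Int.natCast_nonneg q)]

lemma hgt_add_start (i c : ℤ) (σ : ℕ → ℤ) (k : ℕ) : hgt (i + c) σ k = hgt i σ k + c := by
  unfold hgt
  ring

lemma ext_mem_Icc {p q ℓ : ℕ} {s : Fin ℓ → ℤ} (hs : s ∈ steps p q ℓ) (t : ℕ) :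
    ext s t ∈ Icc (-(p : ℤ)) q := by
  unfold _root_.ext
  split_ifs with ht
  · exact Fintype.mem_piFinset.mp hs _
  · simp

/-- A closed path with steps in `[-p, q]` climbs at most `k q` in its first `k` steps and must
descend again in its last `m` steps, so it rises at most `min (k q) (m p)`; symmetrically for
the depth. -/
lemma abs_hgt_le_of_hgt_eq_zero {p q : ℕ} {σ : ℕ → ℤ} (hσ : ∀ t, σ t ∈ Icc (-(p : ℤ)) q)
    {k m : ℕ} (hclosed : hgt 0 σ (k + m) = 0) :
    |hgt 0 σ k| ≤ ((p * q * (k + m) / (p + q) : ℕ) : ℤ) := by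
  have hsplit := Finset.sum_range_add_sum_Ico σ (Nat.le_add_right k m)
  have hhead_le := Finset.sum_le_card_nsmul (range k) σ q fun t _ => (mem_Icc.mp (hσ t)).2
  have hle_head := Finset.card_nsmul_le_sum (range k) σ (-p) fun t _ => (mem_Icc.mp (hσ t)).1
  have htail_le := Finset.sum_le_card_nsmul (Ico k (k + m)) σ q fun t _ => (mem_Icc.mp (hσ t)).2
  have hle_tail := Finset.card_nsmul_le_sum (Ico k (k + m)) σ (-p) fun t _ => (mem_Icc.mp (hσ t)).1
  simp only [hgt, zero_add, card_range, Nat.card_Ico, Nat.add_sub_cancel_left, nsmul_eq_mul]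
    at hclosed hsplit hhead_le hle_head htail_le hle_tail ⊢
  rw [abs_le]
  constructor
  · have hdepth := le_natCast_div_of_le_mul_of_le_mul (h := -∑ t ∈ range k, σ t) (p := q) (q := p)
      (k := k) (m := m) (by linarith) (by linarith)
    rw [mul_comm q p, add_comm q p] at hdepth
    linarith
  · exact le_natCast_div_of_le_mul_of_le_mul (by linarith) (by linarith)

lemma mem_PsetP {p q ℓ : ℕ} {i j a : ℤ} {s : Fin ℓ → ℤ} :
    (a, s) ∈ PsetP p q ℓ i j ↔ a = i ∧ s ∈ steps p q ℓ ∧ hgt a (ext s) ℓ = j := by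
  simp only [PsetP, mem_filter, mem_product, mem_singleton, and_assoc]

lemma PsetP_add_eq_image (p q ℓ : ℕ) (i j c : ℤ) :
    PsetP p q ℓ (i + c) (j + c) = (PsetP p q ℓ i j).image fun γ => (γ.1 + c, γ.2) := by
  ext ⟨a, s⟩
  simp only [mem_image, mem_PsetP, Prod.mk.injEq, Prod.exists]
  constructor
  · rintro ⟨rfl, hs, hend⟩
    exact ⟨i, s, ⟨rfl, hs, by rw [hgt_add_start] at hend; linarith⟩, rfl, rfl⟩
  · rintro ⟨b, s, ⟨rfl, hs, hend⟩, rfl, rfl⟩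
    exact ⟨rfl, hs, by rw [hgt_add_start, hend]⟩

lemma DboxSetP_eq_PsetP {p q n ℓ : ℕ} {i : ℤ} (hlow : ((p * q * ℓ / (p + q) : ℕ) : ℤ) ≤ i)
    (hhigh : i + ((p * q * ℓ / (p + q) : ℕ) : ℤ) ≤ n - 1) :
    DboxSetP p q n ℓ i i = PsetP p q ℓ i i := by
  ext ⟨a, s⟩
  simp only [DboxSetP, mem_PsetP, mem_filter, mem_product, mem_singleton, and_assoc]
  refine ⟨fun h => ⟨h.1, h.2.1, h.2.2.1⟩, ?_⟩
  rintro ⟨rfl, hs, hend⟩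
  refine ⟨rfl, hs, hend, fun k hk => ?_⟩
  obtain ⟨m, rfl⟩ := Nat.exists_eq_add_of_le hk
  have hclosed : hgt 0 (ext s) (k + m) = 0 := by
    rw [← zero_add a, hgt_add_start] at hend
    linarith
  have hbound := abs_le.mp (abs_hgt_le_of_hgt_eq_zero (ext_mem_Icc hs) hclosed)
  rw [← zero_add a, hgt_add_start]
  constructor <;> linarith [hbound.1, hbound.2]

theorem shifted_paths_bijection_general
    (p q : ℕ) (ℓ : ℕ)
    (N : ℕ) (hN : N = p * q * ℓ / (p + q) + max p q + 1)
    (n i : ℕ) (hi1 : N ≤ i) (hi2 : i ≤ n - 1 - N) :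
    DboxSetP p q n ℓ (i : ℤ) (i : ℤ) =
        (PsetP p q ℓ 0 0).image (fun γ => (γ.1 + (i : ℤ), γ.2)) ∧
    Function.Injective (fun γ : ℤ × (Fin ℓ → ℤ) => (γ.1 + (i : ℤ), γ.2)) ∧
    DboxSetP p q n ℓ (i : ℤ) (i : ℤ) = PsetP p q ℓ (i : ℤ) (i : ℤ) := by
  have hD : DboxSetP p q n ℓ (i : ℤ) (i : ℤ) = PsetP p q ℓ (i : ℤ) (i : ℤ) :=
    DboxSetP_eq_PsetP (by omega) (by omega)
  refine ⟨?_, (add_left_injective (i : ℤ)).prodMap Function.injective_id, hD⟩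
  rw [hD, ← PsetP_add_eq_image, zero_add]

/-- **Proposition 7.4**: with `N = ⌊pqℓ/(p+q)⌋ + max(p,q) + 1`, if `n ≥ 2N+1` and
`N ≤ i ≤ n-1-N`, then `D_{[ℓ,i,i,n]}` is the image of `P_{[ℓ,0,0]}` under the (injective)
upward shift by `i`, and `D_{[ℓ,i,i,n]} = P_{[ℓ,i,i]}`. -/
theorem shifted_paths_bijection
    (p q : ℕ) (hp : 1 ≤ p) (hq : 1 ≤ q) (ℓ : ℕ) (hℓ : 1 ≤ ℓ)
    (N : ℕ) (hN : N = p * q * ℓ / (p + q) + max p q + 1)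
    (n i : ℕ) (hn : 2 * N + 1 ≤ n) (hi1 : N ≤ i) (hi2 : i ≤ n - 1 - N) :
    DboxSetP p q n ℓ (i : ℤ) (i : ℤ) =
        (PsetP p q ℓ 0 0).image (fun γ => (γ.1 + (i : ℤ), γ.2)) ∧
    Function.Injective (fun γ : ℤ × (Fin ℓ → ℤ) => (γ.1 + (i : ℤ), γ.2)) ∧
    DboxSetP p q n ℓ (i : ℤ) (i : ℤ) = PsetP p q ℓ (i : ℤ) (i : ℤ) :=
  shifted_paths_bijection_general p q ℓ N hN n i hi1 hi2
end
end

section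
/- For every integer ℓ ≥ 0, lim_{n→∞} (1/n)·𝔼[Tr(H_n^ℓ)] = 𝔼[W_{[ℓ,0,0]}]. Equivalently, writing λ_{1,n}, …, λ_{n,n} for the eigenvalues of H_n counted with multiplicity (the roots of its characteristic polynomial), lim_{n→∞} 𝔼[(1/n) Σ_{i=1}^{n} λ_{i,n}^ℓ] = 𝔼[W_{[ℓ,0,0]}]. -/
open scoped BigOperators
open Finset

noncomputable section

/-- The principal `n × n` truncation `H_n` of the banded matrix `H`. -/
def Hnmat (p q : ℕ) (a : ℤ → ℤ → ℂ) (n : ℕ) : Matrix (Fin n) (Fin n) ℂ := fun i j =>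
  if -(p : ℤ) ≤ ((j : ℕ) : ℤ) - ((i : ℕ) : ℤ) ∧ ((j : ℕ) : ℤ) - ((i : ℕ) : ℤ) ≤ (q : ℤ) then
    a (((j : ℕ) : ℤ) - ((i : ℕ) : ℤ)) (min ((i : ℕ) : ℤ) ((j : ℕ) : ℤ)) else 0

open MeasureTheory ProbabilityTheory

/-!
`H_n` is the truncation to `{0, …, n-1}` of the band matrix whose `(h, h + k)` entry is the weight
of a step `h → h + k`. Expanding `(H_nˡ)_{ii}` over paths therefore gives the weighted sum of
length-`ℓ` loops at height `i` that stay in the strip `0 ≤ h ≤ n - 1`. A loop at `i` moves at most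
`pℓ` down and `qℓ` up, so for all but `(p + q)ℓ` diagonal indices the strip constraint is void and
`(H_nˡ)_{ii} = W_{[ℓ,i,i]}`. Independence together with identical distribution along diagonals
makes the joint law of the entries invariant under the vertical shift by `i`, so every such
diagonal term has expectation `𝔼[W_{[ℓ,0,0]}]`; the remaining `O(1)` terms are uniformly bounded
and disappear after division by `n`.
-/

namespace ProbabilityTheory

variable {Ω ι : Type*} [MeasurableSpace Ω] {μ : Measure Ω} {τ : ι → ι}

lemma iIndepFun.identDistrib_pi_comp {E : Type*} [MeasurableSpace E] {X : ι → Ω → E}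
    (hX : iIndepFun X μ) (hm : ∀ i, Measurable (X i)) (hτ : τ.Injective)
    (hid : ∀ i, IdentDistrib (X (τ i)) (X i) μ μ) (S : Finset ι) :
    IdentDistrib (fun ω (y : S) => X (τ y) ω) (fun ω (y : S) => X y ω) μ μ where
  aemeasurable_fst := (measurable_pi_lambda _ fun _ => hm _).aemeasurable
  aemeasurable_snd := (measurable_pi_lambda _ fun _ => hm _).aemeasurable
  map_eq := by
    have hτS : iIndepFun (fun (y : S) => X (τ y)) μ := hX.precomp (hτ.comp Subtype.val_injective)
    rw [hτS.map_fun_eq_pi_map fun _ => (hm _).aemeasurable,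
      (hX.precomp Subtype.val_injective).map_fun_eq_pi_map fun _ => (hm _).aemeasurable]
    exact congrArg Measure.pi (funext fun y => (hid y).map_eq)

lemma iIndepFun.integral_prod_comp_eq {X : ι → Ω → ℂ} (hX : iIndepFun X μ)
    (hm : ∀ i, Measurable (X i)) (hτ : τ.Injective) (hid : ∀ i, IdentDistrib (X (τ i)) (X i) μ μ)
    {κ : Type*} (s : Finset κ) (g : κ → ι) :
    ∫ ω, ∏ k ∈ s, X (τ (g k)) ω ∂μ = ∫ ω, ∏ k ∈ s, X (g k) ω ∂μ := by
  classical
  let F : (s.image g → ℂ) → ℂ := fun v => ∏ k ∈ s.attach, v ⟨g k, mem_image_of_mem g k.2⟩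
  have hF : Measurable F := Finset.measurable_prod _ fun k _ => measurable_pi_apply _
  have h := ((hX.identDistrib_pi_comp hm hτ hid (s.image g)).comp hF).integral_eq
  simp only [F, Function.comp_def] at h
  convert h using 3 <;> exact (s.prod_attach _).symm

end ProbabilityTheory

lemma tendsto_inv_mul_sum_range_of_eq_off_boundary {e : ℕ → ℕ → ℂ} {L : ℂ} {D : ℝ} (r s : ℕ)
    (hD : ∀ n i, ‖e n i - L‖ ≤ D) (hinterior : ∀ n i, r ≤ i → i + s < n → e n i = L) :
    Filter.Tendsto (fun n : ℕ => (n : ℂ)⁻¹ * ∑ i ∈ range n, e n i) Filter.atTop (nhds L) := by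
  have hsum : ∀ n : ℕ, ‖∑ i ∈ range n, e n i - n * L‖ ≤ (r + s) * D := by
    intro n
    have hcard : #{i ∈ range n | ¬(r ≤ i ∧ i + s < n)} ≤ r + s :=
      calc #{i ∈ range n | ¬(r ≤ i ∧ i + s < n)}
          ≤ #(range r ∪ Ico (n - s) n) := card_le_card fun i hi => by
            simp only [mem_filter, mem_range] at hi
            simp only [mem_union, mem_range, mem_Ico]
            omega
        _ ≤ r + s := (card_union_le _ _).trans (by simp only [card_range, Nat.card_Ico]; omega)
    calc ‖∑ i ∈ range n, e n i - n * L‖ = ‖∑ i ∈ range n, (e n i - L)‖ := by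
          rw [sum_sub_distrib, sum_const, card_range, nsmul_eq_mul]
      _ ≤ ∑ i ∈ range n, ‖e n i - L‖ := norm_sum_le _ _
      _ = ∑ i ∈ range n with ¬(r ≤ i ∧ i + s < n), ‖e n i - L‖ := by
          refine (sum_filter_of_ne (p := fun i => ¬(r ≤ i ∧ i + s < n)) fun i _ hi => ?_).symm
          contrapose! hi
          rw [hinterior n i hi.1 hi.2, sub_self, norm_zero]
      _ ≤ #{i ∈ range n | ¬(r ≤ i ∧ i + s < n)} • D := sum_le_card_nsmul _ _ _ fun i _ => hD n i
      _ ≤ (r + s) * D := by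
          rw [nsmul_eq_mul]
          exact mul_le_mul_of_nonneg_right (by exact_mod_cast hcard)
            ((norm_nonneg _).trans (hD 0 0))
  rw [← tendsto_sub_nhds_zero_iff]
  refine squeeze_zero_norm' ?_ (tendsto_const_div_atTop_nhds_zero_nat ((r + s) * D))
  filter_upwards [Filter.eventually_gt_atTop 0] with n hn
  have hn' : (n : ℂ) ≠ 0 := Nat.cast_ne_zero.mpr hn.ne'
  rw [show (n : ℂ)⁻¹ * ∑ i ∈ range n, e n i - L = (n : ℂ)⁻¹ * (∑ i ∈ range n, e n i - n * L) by
    field_simp, norm_mul, norm_inv, Complex.norm_natCast, div_eq_inv_mul]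
  exact mul_le_mul_of_nonneg_left (hsum n) (by positivity)

namespace BandMatrix

variable {p q : ℕ}

lemma ext_of_lt {n : ℕ} (s : Fin n → ℤ) {t : ℕ} (ht : t < n) : ext s t = s ⟨t, ht⟩ :=
  dif_pos ht

lemma ext_snoc_of_lt {n : ℕ} (s : Fin n → ℤ) (x : ℤ) {t : ℕ} (ht : t < n) :
    ext (Fin.snoc s x : Fin (n + 1) → ℤ) t = ext s t := by
  rw [ext_of_lt _ (Nat.lt_succ_of_lt ht), ext_of_lt _ ht]
  exact Fin.snoc_castSucc (α := fun _ => ℤ) (i := ⟨t, ht⟩) ..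

lemma ext_snoc_last {n : ℕ} (s : Fin n → ℤ) (x : ℤ) :
    ext (Fin.snoc s x : Fin (n + 1) → ℤ) n = x := by
  rw [ext_of_lt _ (Nat.lt_succ_self n)]
  exact Fin.snoc_last (α := fun _ => ℤ) ..

lemma hgt_zero (i : ℤ) (σ : ℕ → ℤ) : hgt i σ 0 = i := by
  simp [hgt]

lemma hgt_eq_add (i : ℤ) (σ : ℕ → ℤ) (k : ℕ) : hgt i σ k = i + hgt 0 σ k := by
  simp [hgt]

lemma hgt_snoc_of_le {n : ℕ} (i : ℤ) (s : Fin n → ℤ) (x : ℤ) {k : ℕ} (hk : k ≤ n) :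
    hgt i (ext (Fin.snoc s x : Fin (n + 1) → ℤ)) k = hgt i (ext s) k := by
  unfold hgt
  congr 1
  exact sum_congr rfl fun t ht => ext_snoc_of_lt s x ((mem_range.mp ht).trans_le hk)

lemma hgt_snoc_succ {n : ℕ} (i : ℤ) (s : Fin n → ℤ) (x : ℤ) :
    hgt i (ext (Fin.snoc s x : Fin (n + 1) → ℤ)) (n + 1) = hgt i (ext s) n + x := by
  rw [hgt, sum_range_succ, ext_snoc_last, ← add_assoc, ← hgt, hgt_snoc_of_le i s x le_rfl]

lemma wgt_snoc (a : ℤ → ℤ → ℂ) {n : ℕ} (i : ℤ) (s : Fin n → ℤ) (x : ℤ) :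
    wgt a (n + 1) i (ext (Fin.snoc s x : Fin (n + 1) → ℤ))
      = wgt a n i (ext s) * stepW a (hgt i (ext s) n) x := by
  rw [wgt, prod_range_succ, hgt_snoc_of_le i s x le_rfl, ext_snoc_last]
  congr 1
  refine prod_congr rfl fun k hk => ?_
  rw [hgt_snoc_of_le i s x (mem_range.mp hk).le, ext_snoc_of_lt s x (mem_range.mp hk)]

lemma mem_steps {n : ℕ} {s : Fin n → ℤ} :
    s ∈ steps p q n ↔ ∀ k, -(p : ℤ) ≤ s k ∧ s k ≤ q := by
  simp [steps, Fintype.mem_piFinset]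

lemma ext_mem_band {n : ℕ} {s : Fin n → ℤ} (hs : s ∈ steps p q n) (k : ℕ) :
    -(p : ℤ) ≤ ext s k ∧ ext s k ≤ q := by
  by_cases hk : k < n
  · rw [ext_of_lt s hk]
    exact mem_steps.mp hs _
  · rw [_root_.ext, dif_neg hk]
    omega

lemma sum_steps_succ {M : Type*} [AddCommMonoid M] (n : ℕ) (F : (Fin (n + 1) → ℤ) → M) :
    ∑ s ∈ steps p q (n + 1), F s
      = ∑ s ∈ steps p q n, ∑ x ∈ Icc (-(p : ℤ)) q, F (Fin.snoc s x) := by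
  rw [← sum_product']
  refine sum_nbij' (fun s => (Fin.init s, s (Fin.last n))) (fun y => Fin.snoc y.1 y.2)
    (fun s hs => ?_) (fun y hy => ?_) (fun s _ => Fin.snoc_init_self s)
    (fun y _ => by simp) (fun s _ => by simp)
  · rw [mem_steps] at hs
    exact mem_product.mpr ⟨mem_steps.mpr fun k => hs _, mem_Icc.mpr (hs _)⟩
  · obtain ⟨hs, hx⟩ := mem_product.mp hy
    refine mem_steps.mpr fun k => ?_
    induction k using Fin.lastCases with
    | last => simpa using mem_Icc.mp hx
    | cast k => simpa using mem_steps.mp hs k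

lemma hgt_mem_Icc {ℓ : ℕ} {s : Fin ℓ → ℤ} (hs : s ∈ steps p q ℓ) (i : ℤ) {k : ℕ} (hk : k ≤ ℓ) :
    i - p * ℓ ≤ hgt i (ext s) k ∧ hgt i (ext s) k ≤ i + q * ℓ := by
  have hsum : ∀ t ∈ range k, -(p : ℤ) ≤ ext s t ∧ ext s t ≤ q := fun t _ => ext_mem_band hs t
  have hlow := card_nsmul_le_sum _ _ _ fun t ht => (hsum t ht).1
  have hupp := sum_le_card_nsmul _ _ _ fun t ht => (hsum t ht).2
  simp only [card_range, nsmul_eq_mul] at hlow hupp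
  have hkℓ : (k : ℤ) ≤ ℓ := by exact_mod_cast hk
  rw [hgt]
  constructor <;> nlinarith


def bandEntry (p q : ℕ) (a : ℤ → ℤ → ℂ) (h j : ℤ) : ℂ :=
  if -(p : ℤ) ≤ j - h ∧ j - h ≤ q then stepW a h (j - h) else 0

lemma stepW_eq (a : ℤ → ℤ → ℂ) (h s : ℤ) : stepW a h s = a s (h + min s 0) := by
  unfold stepW
  split_ifs with hs
  · rw [min_eq_right hs, add_zero]
  · rw [min_eq_left (by omega)]

lemma Hnmat_apply (a : ℤ → ℤ → ℂ) {n : ℕ} (m j : Fin n) :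
    Hnmat p q a n m j = bandEntry p q a m j := by
  unfold Hnmat bandEntry
  rw [stepW_eq]
  congr 2
  omega

abbrev InStrip (N ℓ : ℕ) (i : ℤ) (σ : ℕ → ℤ) : Prop :=
  ∀ k ≤ ℓ, 0 ≤ hgt i σ k ∧ hgt i σ k ≤ (N : ℤ) - 1

lemma inStrip_snoc {N ℓ : ℕ} (i : ℤ) (s : Fin ℓ → ℤ) (x : ℤ) :
    InStrip N (ℓ + 1) i (ext (Fin.snoc s x : Fin (ℓ + 1) → ℤ)) ↔
      InStrip N ℓ i (ext s) ∧ 0 ≤ hgt i (ext s) ℓ + x ∧ hgt i (ext s) ℓ + x ≤ (N : ℤ) - 1 := by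
  constructor
  · intro H
    refine ⟨fun k hk => ?_, ?_⟩
    · rw [← hgt_snoc_of_le i s x hk]
      exact H k (by omega)
    · rw [← hgt_snoc_succ]
      exact H _ le_rfl
  · rintro ⟨H, hlow, hupp⟩ k hk
    rcases Nat.lt_or_ge k (ℓ + 1) with hk' | hk'
    · rw [hgt_snoc_of_le i s x (by omega)]
      exact H k (by omega)
    · obtain rfl : k = ℓ + 1 := by omega
      rw [hgt_snoc_succ]
      exact ⟨hlow, hupp⟩

lemma Aboxpoly_zero (a : ℤ → ℤ → ℂ) (N : ℕ) (i j : ℤ) :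
    Aboxpoly p q a N 0 i j = if i = j ∧ 0 ≤ i ∧ i ≤ (N : ℤ) - 1 then 1 else 0 := by
  rw [Aboxpoly, steps, Fintype.piFinset_of_isEmpty, Fintype.sum_unique]
  simp [hgt_zero, wgt]

lemma sum_Icc_ite_wgt_snoc (a : ℤ → ℤ → ℂ) (N : ℕ) (i : ℤ) {ℓ : ℕ} (s : Fin ℓ → ℤ) {j : ℤ}
    (hj : 0 ≤ j ∧ j ≤ (N : ℤ) - 1) :
    ∑ x ∈ Icc (-(p : ℤ)) q,
        (if hgt i (ext (Fin.snoc s x : Fin (ℓ + 1) → ℤ)) (ℓ + 1) = j ∧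
            InStrip N (ℓ + 1) i (ext (Fin.snoc s x : Fin (ℓ + 1) → ℤ))
          then wgt a (ℓ + 1) i (ext (Fin.snoc s x : Fin (ℓ + 1) → ℤ)) else 0)
      = if InStrip N ℓ i (ext s) then wgt a ℓ i (ext s) * bandEntry p q a (hgt i (ext s) ℓ) j
        else 0 := by
  simp only [hgt_snoc_succ, inStrip_snoc, wgt_snoc]
  split_ifs with hs
  · set h := hgt i (ext s) ℓ
    trans ∑ x ∈ Icc (-(p : ℤ)) q, if j - h = x then wgt a ℓ i (ext s) * stepW a h x else 0
    · refine sum_congr rfl fun x _ => if_congr ⟨fun hx => by omega, fun hx => ?_⟩ rfl rfl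
      exact ⟨by omega, hs, by omega, by omega⟩
    · rw [sum_ite_eq, bandEntry, mul_ite, mul_zero]
      exact if_congr mem_Icc rfl rfl
  · exact sum_eq_zero fun x _ => if_neg fun H => hs H.2.1

lemma sum_ite_mul_Hnmat (a : ℤ → ℤ → ℂ) {n : ℕ} {h : ℤ} {P : Prop} [Decidable P]
    (hP : P → 0 ≤ h ∧ h ≤ (n : ℤ) - 1) (c : ℂ) (j : Fin n) :
    ∑ m : Fin n, (if h = ((m : ℕ) : ℤ) ∧ P then c else 0) * Hnmat p q a n m j
      = if P then c * bandEntry p q a h j else 0 := by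
  split_ifs with hPt
  · have := hP hPt
    obtain ⟨m₀, rfl⟩ : ∃ m₀ : Fin n, ((m₀ : ℕ) : ℤ) = h :=
      ⟨⟨h.toNat, by omega⟩, by simp only; omega⟩
    rw [sum_eq_single m₀ (fun m _ hm => ?_) (by simp), if_pos ⟨rfl, hPt⟩, Hnmat_apply]
    rw [if_neg fun H => hm (Fin.ext (by exact_mod_cast H.1.symm)), zero_mul]
  · simp [hPt]

lemma Hnmat_pow_apply (a : ℤ → ℤ → ℂ) (n ℓ : ℕ) (i j : Fin n) :
    (Hnmat p q a n ^ ℓ) i j = Aboxpoly p q a n ℓ i j := by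
  induction ℓ generalizing j with
  | zero =>
    rw [pow_zero, Aboxpoly_zero, Matrix.one_apply]
    refine if_congr ?_ rfl rfl
    rw [Fin.ext_iff]
    have := i.isLt
    omega
  | succ ℓ ih =>
    calc (Hnmat p q a n ^ (ℓ + 1)) i j
        = ∑ m : Fin n, ∑ s ∈ steps p q ℓ,
            (if hgt i (ext s) ℓ = ((m : ℕ) : ℤ) ∧ InStrip n ℓ i (ext s)
              then wgt a ℓ i (ext s) else 0) * Hnmat p q a n m j := by
          simp only [pow_succ, Matrix.mul_apply, ih, Aboxpoly, sum_mul]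
      _ = ∑ s ∈ steps p q ℓ, if InStrip n ℓ i (ext s)
            then wgt a ℓ i (ext s) * bandEntry p q a (hgt i (ext s) ℓ) j else 0 := by
          rw [sum_comm]
          exact sum_congr rfl fun s _ => sum_ite_mul_Hnmat a (fun hs => hs ℓ le_rfl) _ j
      _ = Aboxpoly p q a n (ℓ + 1) i j := by
          rw [Aboxpoly, sum_steps_succ]
          refine sum_congr rfl fun s _ => (sum_Icc_ite_wgt_snoc a n i s ?_).symm
          have := j.isLt
          omega

lemma trace_Hnmat_pow (a : ℤ → ℤ → ℂ) (n ℓ : ℕ) :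
    (Hnmat p q a n ^ ℓ).trace = ∑ i ∈ range n, Aboxpoly p q a n ℓ i i := by
  rw [Matrix.trace, ← Fin.sum_univ_eq_sum_range (fun i => Aboxpoly p q a n ℓ i i)]
  simp only [Matrix.diag, Hnmat_pow_apply]

lemma Aboxpoly_eq_Wpoly_of_interior (a : ℤ → ℤ → ℂ) {N ℓ : ℕ} {i : ℤ} (hlow : p * ℓ ≤ i)
    (hupp : i + q * ℓ < N) : Aboxpoly p q a N ℓ i i = Wpoly p q a ℓ i i :=
  sum_congr rfl fun s hs => if_congr (and_iff_left_of_imp fun _ k hk => by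
    have := hgt_mem_Icc hs i hk
    omega) rfl rfl

def pathSum (p q ℓ : ℕ) (P : (Fin ℓ → ℤ) → Prop) [DecidablePred P] (a : ℤ → ℤ → ℂ) (i : ℤ) :
    ℂ :=
  ∑ s ∈ steps p q ℓ, if P s then wgt a ℓ i (ext s) else 0

lemma Aboxpoly_eq_pathSum (a : ℤ → ℤ → ℂ) (N ℓ : ℕ) (i j : ℤ) :
    Aboxpoly p q a N ℓ i j
      = pathSum p q ℓ (fun s => hgt i (ext s) ℓ = j ∧ InStrip N ℓ i (ext s)) a i :=
  rfl

lemma Wpoly_self_eq_pathSum (a : ℤ → ℤ → ℂ) (ℓ : ℕ) (i : ℤ) :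
    Wpoly p q a ℓ i i = pathSum p q ℓ (fun s => hgt 0 (ext s) ℓ = 0) a i :=
  sum_congr rfl fun s _ => if_congr (by rw [hgt_eq_add]; omega) rfl rfl

lemma wgt_eq_prod (a : ℤ → ℤ → ℂ) (ℓ : ℕ) (i : ℤ) (σ : ℕ → ℤ) :
    wgt a ℓ i σ = ∏ k ∈ range ℓ, a (σ k) (hgt 0 σ k + min (σ k) 0 + i) := by
  refine prod_congr rfl fun k _ => ?_
  rw [stepW_eq, hgt_eq_add i σ k]
  ring_nf

section Bounds

variable {a : ℤ → ℤ → ℂ} {C : ℝ} (hbound : ∀ k n : ℤ, -(p : ℤ) ≤ k → k ≤ q → ‖a k n‖ ≤ C)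
include hbound

lemma norm_wgt_le {σ : ℕ → ℤ} (hσ : ∀ k, -(p : ℤ) ≤ σ k ∧ σ k ≤ q) (ℓ : ℕ) (i : ℤ) :
    ‖wgt a ℓ i σ‖ ≤ C ^ ℓ := by
  rw [wgt, norm_prod]
  refine (prod_le_prod (fun _ _ => norm_nonneg _) fun k _ => ?_).trans_eq
    (by rw [prod_const, card_range])
  rw [stepW_eq]
  exact hbound _ _ (hσ k).1 (hσ k).2

lemma norm_pathSum_le {ℓ : ℕ} (P : (Fin ℓ → ℤ) → Prop) [DecidablePred P] (i : ℤ) :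
    ‖pathSum p q ℓ P a i‖ ≤ #(steps p q ℓ) * C ^ ℓ := by
  rw [← nsmul_eq_mul]
  refine (norm_sum_le _ _).trans (sum_le_card_nsmul _ _ _ fun s hs => ?_)
  refine (?_ : _ ≤ ‖wgt a ℓ i (ext s)‖).trans (norm_wgt_le hbound (ext_mem_band hs) ℓ i)
  split_ifs <;> simp

end Bounds

section Random

variable {Ω : Type*} [MeasureSpace Ω] [IsProbabilityMeasure (ℙ : Measure Ω)]
  {a : ℤ → ℤ → Ω → ℂ} (hmeas : ∀ k n : ℤ, Measurable (a k n)) {C : ℝ}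
  (hbound : ∀ (k n : ℤ) (ω : Ω), -(p : ℤ) ≤ k → k ≤ q → ‖a k n ω‖ ≤ C)
  (hindep : iIndepFun (fun x : {k : ℤ // -(p : ℤ) ≤ k ∧ k ≤ (q : ℤ)} × ℤ => a x.1.1 x.2) ℙ)
  (hident : ∀ k : ℤ, -(p : ℤ) ≤ k → k ≤ (q : ℤ) → ∀ n m : ℤ, IdentDistrib (a k n) (a k m) ℙ ℙ)

include hmeas hbound in
lemma integrable_wgt {σ : ℕ → ℤ} (hσ : ∀ k, -(p : ℤ) ≤ σ k ∧ σ k ≤ q) (ℓ : ℕ) (i : ℤ) :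
    Integrable (fun ω => wgt (fun k m => a k m ω) ℓ i σ) := by
  refine .of_bound ?_ (C ^ ℓ) (ae_of_all _ fun ω => norm_wgt_le (hbound · · ω) hσ ℓ i)
  simp only [wgt_eq_prod]
  exact (Finset.measurable_prod _ fun k _ => hmeas _ _).aestronglyMeasurable

include hmeas hbound in
lemma integrable_ite_wgt {ℓ : ℕ} {s : Fin ℓ → ℤ} (hs : s ∈ steps p q ℓ) (c : Prop) [Decidable c]
    (i : ℤ) : Integrable (fun ω => if c then wgt (fun k m => a k m ω) ℓ i (ext s) else 0) := by
  split_ifs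
  · exact integrable_wgt hmeas hbound (ext_mem_band hs) ℓ i
  · exact integrable_zero _ _ _

include hmeas hbound in
lemma integrable_pathSum {ℓ : ℕ} (P : (Fin ℓ → ℤ) → Prop) [DecidablePred P] (i : ℤ) :
    Integrable (fun ω => pathSum p q ℓ P (fun k m => a k m ω) i) :=
  integrable_finsetSum _ fun _ hs => integrable_ite_wgt hmeas hbound hs _ i

include hbound in
lemma norm_integral_pathSum_le {ℓ : ℕ} (P : (Fin ℓ → ℤ) → Prop) [DecidablePred P] (i : ℤ) :
    ‖∫ ω, pathSum p q ℓ P (fun k m => a k m ω) i‖ ≤ #(steps p q ℓ) * C ^ ℓ := by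
  simpa using norm_integral_le_of_norm_le_const
    (ae_of_all ℙ fun ω => norm_pathSum_le (hbound · · ω) P i)

omit [IsProbabilityMeasure (ℙ : Measure Ω)] in
include hmeas hindep hident in
lemma integral_wgt_shift {σ : ℕ → ℤ} (hσ : ∀ k, -(p : ℤ) ≤ σ k ∧ σ k ≤ q) (ℓ : ℕ) (i : ℤ) :
    ∫ ω, wgt (fun k m => a k m ω) ℓ i σ = ∫ ω, wgt (fun k m => a k m ω) ℓ 0 σ := by
  simp only [wgt_eq_prod, add_zero]
  exact hindep.integral_prod_comp_eq (fun _ => hmeas _ _) (τ := fun y => (y.1, y.2 + i))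
    (fun y z h => Prod.ext (Prod.ext_iff.mp h).1 (by simpa using (Prod.ext_iff.mp h).2))
    (fun y => hident _ y.1.2.1 y.1.2.2 _ _) (range ℓ)
    (fun k => (⟨σ k, hσ k⟩, hgt 0 σ k + min (σ k) 0))

include hmeas hbound hindep hident in
lemma integral_pathSum_shift {ℓ : ℕ} (P : (Fin ℓ → ℤ) → Prop) [DecidablePred P] (i : ℤ) :
    ∫ ω, pathSum p q ℓ P (fun k m => a k m ω) i = ∫ ω, pathSum p q ℓ P (fun k m => a k m ω) 0 := by
  simp only [pathSum]
  rw [integral_finsetSum _ fun _ hs => integrable_ite_wgt hmeas hbound hs _ i,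
    integral_finsetSum _ fun _ hs => integrable_ite_wgt hmeas hbound hs _ 0]
  refine sum_congr rfl fun s hs => ?_
  split_ifs
  · exact integral_wgt_shift hmeas hindep hident (ext_mem_band hs) ℓ i
  · rfl

end Random

end BandMatrix

open BandMatrix in
theorem expected_moments_limit_general
    (p q : ℕ)
    {Ω : Type*} [MeasureSpace Ω] [IsProbabilityMeasure (ℙ : Measure Ω)]
    (a : ℤ → ℤ → Ω → ℂ)
    (hmeas : ∀ k n : ℤ, Measurable (a k n))
    (hindep : iIndepFun
      (fun x : {k : ℤ // -(p : ℤ) ≤ k ∧ k ≤ (q : ℤ)} × ℤ => a x.1.1 x.2) ℙ)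
    (hident : ∀ k : ℤ, -(p : ℤ) ≤ k → k ≤ (q : ℤ) → ∀ n m : ℤ,
      IdentDistrib (a k n) (a k m) ℙ ℙ)
    (C : ℝ)
    (hbound : ∀ (k n : ℤ) (ω : Ω), -(p : ℤ) ≤ k → k ≤ (q : ℤ) → ‖a k n ω‖ ≤ C)
    (ℓ : ℕ) :
    Filter.Tendsto
      (fun n : ℕ =>
        (n : ℂ)⁻¹ * ∫ ω, Matrix.trace (Hnmat p q (fun k m => a k m ω) n ^ ℓ))
      Filter.atTop
      (nhds (∫ ω, Wpoly p q (fun k m => a k m ω) ℓ 0 0)) := by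
  have hexpand : ∀ n : ℕ, ∫ ω, Matrix.trace (Hnmat p q (fun k m => a k m ω) n ^ ℓ)
      = ∑ i ∈ range n, ∫ ω, Aboxpoly p q (fun k m => a k m ω) n ℓ i i := fun n => by
    simp only [trace_Hnmat_pow, Aboxpoly_eq_pathSum]
    exact integral_finsetSum _ fun i _ => integrable_pathSum hmeas hbound _ _
  simp only [hexpand]
  set K : ℝ := #(steps p q ℓ) * C ^ ℓ
  refine tendsto_inv_mul_sum_range_of_eq_off_boundary (D := K + K) (p * ℓ) (q * ℓ)
    (fun n i => (norm_sub_le _ _).trans (add_le_add ?_ ?_)) fun n i hlow hupp => ?_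
  · simp only [Aboxpoly_eq_pathSum]
    exact norm_integral_pathSum_le hbound _ _
  · simp only [Wpoly_self_eq_pathSum]
    exact norm_integral_pathSum_le hbound _ _
  · have hlow' : (p : ℤ) * ℓ ≤ i := by exact_mod_cast hlow
    have hupp' : (i : ℤ) + q * ℓ < n := by exact_mod_cast hupp
    simp only [Aboxpoly_eq_Wpoly_of_interior _ hlow' hupp', Wpoly_self_eq_pathSum]
    exact integral_pathSum_shift hmeas hbound hindep hident _ _

/-- **Theorem 8.1** (expected moments of random banded matrices): if the entries
`aₙ⁽ᵏ⁾` (for `-p ≤ k ≤ q`, `n ∈ ℤ`) are jointly independent random variables, identically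
distributed along each diagonal and surely bounded, then for every `ℓ ≥ 0`,
`lim_{n→∞} (1/n)·𝔼[Tr(H_nˡ)] = 𝔼[W_{[ℓ,0,0]}]`. -/
theorem expected_moments_limit
    (p q : ℕ) (hp : 1 ≤ p) (hq : 1 ≤ q)
    {Ω : Type*} [MeasureSpace Ω] [IsProbabilityMeasure (ℙ : Measure Ω)]
    (a : ℤ → ℤ → Ω → ℂ)
    (hmeas : ∀ k n : ℤ, Measurable (a k n))
    (hindep : iIndepFun
      (fun x : {k : ℤ // -(p : ℤ) ≤ k ∧ k ≤ (q : ℤ)} × ℤ => a x.1.1 x.2) ℙ)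
    (hident : ∀ k : ℤ, -(p : ℤ) ≤ k → k ≤ (q : ℤ) → ∀ n m : ℤ,
      IdentDistrib (a k n) (a k m) ℙ ℙ)
    (C : ℝ)
    (hbound : ∀ (k n : ℤ) (ω : Ω), -(p : ℤ) ≤ k → k ≤ (q : ℤ) → ‖a k n ω‖ ≤ C)
    (ℓ : ℕ) :
    Filter.Tendsto
      (fun n : ℕ =>
        (n : ℂ)⁻¹ * ∫ ω, Matrix.trace (Hnmat p q (fun k m => a k m ω) n ^ ℓ))
      Filter.atTop
      (nhds (∫ ω, Wpoly p q (fun k m => a k m ω) ℓ 0 0)) :=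
  expected_moments_limit_general p q a hmeas hindep hident C hbound ℓ
end
end
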